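/- arXiv:2412.04944 — 6 statements merged into one kernel-verified Lean document; each statement's English description precedes it below -/
import Mathlib

section
/- Let L be an atomistic complete lattice with length at least 2 and C(L) = A(L) ∪ {0,1} its sub-poset of atoms together with bottom and top. For any subset α of the atoms A(L), the operation T_α defined by T_α(x,y) = x ∧ y if x = 1 or y = 1; T_α(x,y) = x if x = y ∈ α; and T_α(x,y) = 0 otherwise, is a t-norm on the bounded poset C(L). -/
def IsTnorm {L : Type*} [PartialOrder L] [BoundedOrder L] (T : L → L → L) : Prop :=
  (∀ x : L, Monotone (T x)) ∧ (∀ x y : L, T x y = T y x) ∧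
  (∀ x y z : L, T x (T y z) = T (T x y) z) ∧ (∀ x : L, T x ⊤ = x)

open Classical in
noncomputable def TD {L : Type*} [Lattice L] [BoundedOrder L] (x y : L) : L :=
  if x = ⊤ ∨ y = ⊤ then x ⊓ y else ⊥

def CL (L : Type*) [CompleteLattice L] : Set L := {x | IsAtom x ∨ x = ⊥ ∨ x = ⊤}

def kappa {L : Type*} [CompleteLattice L] (x : L) : Set L :=
  {u | u ∈ CL L ∧ u ≠ ⊥ ∧ u ≤ x}

noncomputable def Tbar {L : Type*} [CompleteLattice L] (T : L → L → L) (x y : L) : L :=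
  ⨆ u ∈ kappa x, ⨆ v ∈ kappa y, T u v

def IsTnormOn {L : Type*} [PartialOrder L] [OrderTop L] (C : Set L) (T : L → L → L) : Prop :=
  (∀ x ∈ C, ∀ y ∈ C, T x y ∈ C) ∧
  (∀ x ∈ C, ∀ y ∈ C, ∀ z ∈ C, y ≤ z → T x y ≤ T x z) ∧
  (∀ x ∈ C, ∀ y ∈ C, T x y = T y x) ∧
  (∀ x ∈ C, ∀ y ∈ C, ∀ z ∈ C, T x (T y z) = T (T x y) z) ∧
  (∀ x ∈ C, T x ⊤ = x)

open Classical in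
noncomputable def Talpha {L : Type*} [CompleteLattice L] (α : Set L) (x y : L) : L :=
  if x = ⊤ ∨ y = ⊤ then x ⊓ y else if x = y ∧ x ∈ α then x else ⊥

section Talpha

variable {L : Type*} [CompleteLattice L] {α : Set L}

@[simp]
lemma talpha_top_left (y : L) : Talpha α ⊤ y = y := by
  simp [Talpha]

@[simp]
lemma talpha_top_right (x : L) : Talpha α x ⊤ = x := by
  simp [Talpha]

open Classical in
lemma talpha_of_ne_top {x y : L} (hx : x ≠ ⊤) (hy : y ≠ ⊤) :
    Talpha α x y = if x = y ∧ x ∈ α then x else ⊥ := by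
  rw [Talpha, if_neg (by tauto)]

lemma talpha_comm (x y : L) : Talpha α x y = Talpha α y x := by
  by_cases hxy : x = y
  · rw [hxy]
  · unfold Talpha
    by_cases h : x = ⊤ ∨ y = ⊤
    · rw [if_pos h, if_pos h.symm, inf_comm]
    · rw [if_neg h, if_neg (mt Or.symm h), if_neg (fun h' => hxy h'.1),
        if_neg (fun h' => hxy h'.1.symm)]

@[simp]
lemma talpha_bot_left (y : L) : Talpha α ⊥ y = ⊥ := by
  unfold Talpha
  split_ifs <;> simp

@[simp]
lemma talpha_bot_right (x : L) : Talpha α x ⊥ = ⊥ := by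
  rw [talpha_comm, talpha_bot_left]

/-- Away from `⊤` both sides are `x` when `x = y = z ∈ α`, and `⊥` otherwise. -/
lemma talpha_assoc (x y z : L) :
    Talpha α x (Talpha α y z) = Talpha α (Talpha α x y) z := by
  by_cases hxt : x = ⊤
  · simp [hxt]
  by_cases hyt : y = ⊤
  · simp [hyt]
  by_cases hzt : z = ⊤
  · simp [hzt]
  rw [talpha_of_ne_top hyt hzt, talpha_of_ne_top hxt hyt]
  split_ifs with hyz hxy hxy
  · rw [hyz.1]
  · rw [talpha_of_ne_top hxt hyt, if_neg hxy, talpha_bot_left]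
  · rw [talpha_bot_right, talpha_of_ne_top hxt hzt,
      if_neg (fun hxz => hyz ⟨hxy.1.symm.trans hxz.1, hxy.1 ▸ hxz.2⟩)]
  · rw [talpha_bot_right, talpha_bot_left]

lemma talpha_mem_CL (hα : ∀ a ∈ α, IsAtom a) {x y : L} (hx : x ∈ CL L) (hy : y ∈ CL L) :
    Talpha α x y ∈ CL L := by
  unfold Talpha
  split_ifs with htop hxα
  · rcases htop with rfl | rfl
    · simpa using hy
    · simpa using hx
  · exact Or.inl (hα x hxα.2)
  · exact Or.inr (Or.inl rfl)

lemma IsAtom.eq_of_le_of_mem_CL {a z : L} (ha : IsAtom a)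
    (hz : z ∈ CL L) (hzt : z ≠ ⊤) (haz : a ≤ z) : a = z := by
  rcases hz with hz | rfl | rfl
  · exact (hz.le_iff.mp haz).resolve_left ha.1
  · exact absurd (le_bot_iff.mp haz) ha.1
  · exact absurd rfl hzt

lemma talpha_mono_right (hα : ∀ a ∈ α, IsAtom a) {x y z : L} (hz : z ∈ CL L) (hyz : y ≤ z) :
    Talpha α x y ≤ Talpha α x z := by
  by_cases hxt : x = ⊤
  · simpa [hxt] using hyz
  by_cases hyt : y = ⊤
  · subst hyt
    rw [top_le_iff.mp hyz]
  rw [talpha_of_ne_top hxt hyt]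
  split_ifs with hxy
  · obtain ⟨rfl, hxα⟩ := hxy
    by_cases hzt : z = ⊤
    · rw [hzt, talpha_top_right]
    · rw [talpha_of_ne_top hxt hzt, if_pos ⟨(hα x hxα).eq_of_le_of_mem_CL hz hzt hyz, hxα⟩]
  · exact bot_le

end Talpha

theorem stmt2_general {L : Type*} [CompleteLattice L]
    (α : Set L) (hα : ∀ a ∈ α, IsAtom a) :
    IsTnormOn (CL L) (Talpha α) :=
  ⟨fun _ hx _ hy => talpha_mem_CL hα hx hy,
    fun _ _ _ _ _ hz hyz => talpha_mono_right hα hz hyz,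
    fun x _ y _ => talpha_comm x y,
    fun x _ y _ z _ => talpha_assoc x y z,
    fun x _ => talpha_top_right x⟩

theorem stmt2 {L : Type*} [CompleteLattice L] [IsAtomistic L]
    (hlen : ∃ x : L, x ≠ ⊥ ∧ x ≠ ⊤) (α : Set L) (hα : ∀ a ∈ α, IsAtom a) :
    IsTnormOn (CL L) (Talpha α) :=
  stmt2_general α hα
end

section
/- Let L be an atomistic complete lattice with length at least 2 and C(L) = A(L) ∪ {0,1}. Every t-norm T on the bounded poset C(L) equals T_α for the set α = {u ∈ A(L) | T(u,u) = u}, where T_α(x,y) = x ∧ y if 1 ∈ {x,y}, T_α(x,y) = x if x = y ∈ α, and 0 otherwise. -/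
/-! Monotonicity and the unit ⊤ give `T x y ≤ x ⊓ y`. Two distinct elements of `C(L)` below `⊤`
meet in `⊥`, and an atom `u` has only `⊥` and `u` below it, so `T u u ∈ {⊥, u}`. -/

namespace IsTnormOn

variable {L : Type*} {C : Set L} {T : L → L → L} {x y : L}

theorem apply_top [PartialOrder L] [OrderTop L] (hT : IsTnormOn C T) (hx : x ∈ C) :
    T x ⊤ = x :=
  hT.2.2.2.2 x hx

theorem apply_le_left [PartialOrder L] [OrderTop L] (hT : IsTnormOn C T) (htop : ⊤ ∈ C)
    (hx : x ∈ C) (hy : y ∈ C) : T x y ≤ x :=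
  (hT.2.1 x hx y hy ⊤ htop le_top).trans_eq (hT.apply_top hx)

theorem apply_le_inf [Lattice L] [OrderTop L] (hT : IsTnormOn C T) (htop : ⊤ ∈ C)
    (hx : x ∈ C) (hy : y ∈ C) : T x y ≤ x ⊓ y :=
  le_inf (hT.apply_le_left htop hx hy) (hT.2.2.1 x hx y hy ▸ hT.apply_le_left htop hy hx)

theorem top_apply [PartialOrder L] [OrderTop L] (hT : IsTnormOn C T) (htop : ⊤ ∈ C)
    (hy : y ∈ C) : T ⊤ y = y := by
  rw [hT.2.2.1 ⊤ htop y hy, hT.apply_top hy]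

end IsTnormOn

section CL

variable {L : Type*} [CompleteLattice L] {x y z : L}

theorem top_mem_CL : (⊤ : L) ∈ CL L := Or.inr (Or.inr rfl)

theorem eq_bot_or_eq_of_le_of_mem_CL (hx : x ∈ CL L) (hxt : x ≠ ⊤) (hzx : z ≤ x) :
    z = ⊥ ∨ z = x := by
  rcases hx with hx | rfl | rfl
  · exact hx.le_iff.mp hzx
  · exact Or.inl (le_bot_iff.mp hzx)
  · exact (hxt rfl).elim

theorem inf_eq_bot_of_mem_CL_of_ne (hx : x ∈ CL L) (hy : y ∈ CL L) (hxt : x ≠ ⊤) (hyt : y ≠ ⊤)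
    (hxy : x ≠ y) : x ⊓ y = ⊥ := by
  rcases hx with hx | rfl | rfl
  · rcases hy with hy | rfl | rfl
    · exact disjoint_iff.mp (hx.disjoint_of_ne hy hxy)
    · exact inf_bot_eq x
    · exact (hyt rfl).elim
  · exact bot_inf_eq y
  · exact (hxt rfl).elim

end CL

theorem stmt3_general {L : Type*} [CompleteLattice L]
    (T : L → L → L)
    (hT : IsTnormOn (CL L) T) :
    ∀ x ∈ CL L, ∀ y ∈ CL L,
      T x y = Talpha {u : L | IsAtom u ∧ T u u = u} x y := by
  intro x hx y hy
  rw [Talpha]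
  split_ifs with htop hfix
  · rcases htop with rfl | rfl
    · rw [hT.top_apply top_mem_CL hy, top_inf_eq]
    · rw [hT.apply_top hx, inf_top_eq]
  · obtain ⟨rfl, -, hxx⟩ := hfix
    exact hxx
  · obtain ⟨hxt, hyt⟩ := not_or.mp htop
    have hle := hT.apply_le_inf top_mem_CL hx hy
    by_cases hxy : x = y
    · subst hxy
      rcases eq_bot_or_eq_of_le_of_mem_CL hx hxt (hle.trans inf_le_left) with h | h
      · exact h
      · rcases hx with hatom | rfl | rfl
        · exact absurd ⟨rfl, hatom, h⟩ hfix
        · exact h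
        · exact (hxt rfl).elim
    · exact le_bot_iff.mp (inf_eq_bot_of_mem_CL_of_ne hx hy hxt hyt hxy ▸ hle)

theorem stmt3 {L : Type*} [CompleteLattice L] [IsAtomistic L]
    (hlen : ∃ x : L, x ≠ ⊥ ∧ x ≠ ⊤) (T : L → L → L)
    (hT : IsTnormOn (CL L) T) :
    ∀ x ∈ CL L, ∀ y ∈ CL L,
      T x y = Talpha {u : L | IsAtom u ∧ T u u = u} x y :=
  stmt3_general T hT
end

section
/- Let L be an atomistic Boolean lattice. A t-norm T on L is left-semicontinuous if and only if T belongs to the family {T̄ | T' a t-norm on C(L)} of t-norms generated by t-norms on the atoms. -/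
def LeftSemicts {L : Type*} [CompleteLattice L] (T : L → L → L) : Prop :=
  ∀ a : L, ∀ S : Set L, sSup S ≠ ⊤ → T a (sSup S) = ⨆ x ∈ S, T a x

/-! Every element of an atomistic lattice is the join of its κ-set, so a left-semicontinuous
t-norm is determined by its values on `C(L)`: `T = T̄` for `T' = T`, and `T` maps `C(L)` into
itself because `T x y ≤ x`. Conversely, in a frame an atom below `⋁ S` lies below some member
of `S`, so `κ(⋁ S) = ⋃_{x ∈ S} κ(x)` whenever `⋁ S ≠ ⊤`, and `T̄` commutes with such joins. -/

section CompleteLattice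

variable {L : Type*} [CompleteLattice L]

lemma mem_CL_of_le {x z : L} (hx : x ∈ CL L) (hxt : x ≠ ⊤) (hz : z ≤ x) : z ∈ CL L := by
  rcases hx with hx | rfl | rfl
  · rcases hx.le_iff.mp hz with rfl | rfl
    · exact Or.inr (Or.inl rfl)
    · exact Or.inl hx
  · exact Or.inr (Or.inl (le_bot_iff.mp hz))
  · exact absurd rfl hxt

lemma top_mem_kappa_top [Nontrivial L] : (⊤ : L) ∈ kappa ⊤ :=
  ⟨Or.inr (Or.inr rfl), top_ne_bot, le_rfl⟩

lemma sSup_kappa [IsAtomistic L] (y : L) : sSup (kappa y) = y := by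
  refine le_antisymm (sSup_le fun u hu => hu.2.2) ?_
  conv_lhs => rw [← sSup_atoms_le_eq y]
  exact sSup_le_sSup fun a ha => ⟨Or.inl ha.1, ha.1.1, ha.2⟩

lemma IsTnorm.le_left {T : L → L → L} (hT : IsTnorm T) (x y : L) : T x y ≤ x :=
  (hT.1 x le_top).trans_eq (hT.2.2.2 x)

lemma IsTnorm.isTnormOn_CL {T : L → L → L} (hT : IsTnorm T) : IsTnormOn (CL L) T := by
  obtain ⟨hmono, hcomm, hassoc, hunit⟩ := id hT
  refine ⟨fun x hx y hy => ?_, fun x _ y _ z _ h => hmono x h, fun x _ y _ => hcomm x y,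
    fun x _ y _ z _ => hassoc x y z, fun x _ => hunit x⟩
  by_cases hxt : x = ⊤
  · rwa [hxt, hcomm, hunit]
  · exact mem_CL_of_le hx hxt (hT.le_left x y)

lemma LeftSemicts.eq_iSup_kappa [IsAtomistic L] {T : L → L → L} (hT : LeftSemicts T)
    (hmono : ∀ a, Monotone (T a)) (a y : L) : T a y = ⨆ v ∈ kappa y, T a v := by
  rcases subsingleton_or_nontrivial L with _ | _
  · exact Subsingleton.elim _ _
  by_cases hy : y = ⊤
  · subst hy
    exact le_antisymm (le_iSup₂_of_le ⊤ top_mem_kappa_top le_rfl)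
      (iSup₂_le fun v _ => hmono a le_top)
  · conv_lhs => rw [← sSup_kappa y]
    exact hT a _ (by rwa [sSup_kappa])

lemma LeftSemicts.eq_Tbar [IsAtomistic L] {T : L → L → L} (hT : LeftSemicts T)
    (htn : IsTnorm T) : T = Tbar T := by
  funext x y
  calc T x y = T y x := htn.2.1 x y
    _ = ⨆ u ∈ kappa x, T y u := hT.eq_iSup_kappa htn.1 y x
    _ = ⨆ u ∈ kappa x, T u y := by simp only [htn.2.1 y]
    _ = Tbar T x y := biSup_congr fun u _ => hT.eq_iSup_kappa htn.1 u y

end CompleteLattice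

section Frame

variable {L : Type*} [Order.Frame L]

lemma kappa_sSup {S : Set L} (hS : sSup S ≠ ⊤) : kappa (sSup S) = ⋃ x ∈ S, kappa x := by
  ext u
  simp only [Set.mem_iUnion, kappa, Set.mem_ofPred_eq, exists_prop]
  constructor
  · rintro ⟨hC | rfl | rfl, hb, hle⟩
    · obtain ⟨x, hx, hux⟩ := hC.le_sSup.mp hle
      exact ⟨x, hx, Or.inl hC, hb, hux⟩
    · exact absurd rfl hb
    · exact absurd (top_le_iff.mp hle) hS
  · rintro ⟨x, hx, hC, hb, hle⟩
    exact ⟨hC, hb, hle.trans (le_sSup hx)⟩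

lemma leftSemicts_Tbar (T' : L → L → L) : LeftSemicts (Tbar T') := by
  intro a S hS
  simp only [Tbar, kappa_sSup hS, iSup_iUnion]
  exact iSup₂_comm _

end Frame

theorem stmt11 {L : Type*} [CompleteBooleanAlgebra L] [IsAtomistic L]
    (T : L → L → L) (hT : IsTnorm T) :
    LeftSemicts T ↔ ∃ T' : L → L → L, IsTnormOn (CL L) T' ∧ T = Tbar T' := by
  constructor
  · intro hlsc
    exact ⟨T, hT.isTnormOn_CL, hlsc.eq_Tbar hT⟩
  · rintro ⟨T', -, rfl⟩
    exact leftSemicts_Tbar T'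
end

section
/- A t-norm T on an atomistic complete lattice L is left-continuous if and only if L is isomorphic to the powerset lattice of its atoms and T = T_M (the meet operation). -/
def LeftCts {L : Type*} [CompleteLattice L] (T : L → L → L) : Prop :=
  ∀ a : L, ∀ S : Set L, T a (sSup S) = ⨆ s ∈ S, T a s

/-!
Left-continuity applied to `⊤ = ⨆ atoms` gives `a = T a ⊤ = ⨆_b T a b` for every atom `a`; since
`T a b ≤ a ⊓ b = ⊥` for atoms `b ≠ a`, this forces `T a a = a`, and then monotonicity and
atomisticity give `T = ⊓`. Left-continuity of `⊓` is the frame law, and an atomistic frame is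
isomorphic to the powerset of its atoms, because there an atom below `sSup S` lies below some
member of `S`. Conversely, the frame law transfers along an order isomorphism from a powerset.
-/

namespace IsTnorm

section PartialOrder

variable {L : Type*} [PartialOrder L] [BoundedOrder L] {T : L → L → L}

theorem mono (hT : IsTnorm T) {x x' y y' : L} (hx : x ≤ x') (hy : y ≤ y') :
    T x y ≤ T x' y' :=
  calc T x y ≤ T x y' := hT.1 x hy
    _ = T y' x := hT.2.1 x y'
    _ ≤ T y' x' := hT.1 y' hx
    _ = T x' y' := hT.2.1 y' x'

theorem apply_le_left (hT : IsTnorm T) (x y : L) : T x y ≤ x :=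
  (hT.1 x le_top).trans_eq (hT.2.2.2 x)

end PartialOrder

theorem apply_le_inf {L : Type*} [Lattice L] [BoundedOrder L] {T : L → L → L} (hT : IsTnorm T)
    (x y : L) : T x y ≤ x ⊓ y :=
  le_inf (hT.apply_le_left x y) (hT.2.1 x y ▸ hT.apply_le_left y x)

variable {L : Type*} [CompleteLattice L] [IsAtomistic L] {T : L → L → L}

theorem apply_self_of_isAtom (hT : IsTnorm T) (hL : LeftCts T) {a : L} (ha : IsAtom a) :
    T a a = a := by
  refine le_antisymm ((hT.apply_le_inf a a).trans inf_le_left) ?_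
  calc a = T a (sSup {b | IsAtom b}) := by rw [sSup_atoms_eq_top, hT.2.2.2]
    _ = ⨆ b ∈ {b : L | IsAtom b}, T a b := hL a _
    _ ≤ T a a := iSup₂_le fun b hb => by
      obtain rfl | hab := eq_or_ne b a
      · exact le_rfl
      · calc T a b ≤ a ⊓ b := hT.apply_le_inf a b
          _ = ⊥ := (ha.disjoint_of_ne hb hab.symm).eq_bot
          _ ≤ T a a := bot_le

theorem eq_inf_of_leftCts (hT : IsTnorm T) (hL : LeftCts T) : T = (· ⊓ ·) := by
  funext x y
  refine le_antisymm (hT.apply_le_inf x y) ?_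
  rw [← sSup_atoms_le_eq (x ⊓ y)]
  refine sSup_le fun a ⟨ha, hale⟩ => ?_
  calc a = T a a := (hT.apply_self_of_isAtom hL ha).symm
    _ ≤ T x y := hT.mono (hale.trans inf_le_left) (hale.trans inf_le_right)

end IsTnorm

abbrev Order.Frame.ofLeftCtsInf {L : Type*} [CompleteLattice L] (h : LeftCts (L := L) (· ⊓ ·)) :
    Order.Frame L :=
  Order.Frame.ofMinimalAxioms ⟨fun a S => (h a S).le⟩

theorem OrderIso.leftCts_inf {L F : Type*} [CompleteLattice L] [Order.Frame F] (e : L ≃o F) :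
    LeftCts (L := L) (· ⊓ ·) := fun a S => e.injective <| by
  simp only [e.map_inf, e.map_sSup, e.map_iSup, inf_iSup₂_eq]

noncomputable def orderIsoSetAtoms {L : Type*} [Order.Frame L] [IsAtomistic L] :
    L ≃o Set {a : L // IsAtom a} :=
  OrderIso.ofSurjective
    (OrderEmbedding.ofMapLEIff (fun x => {a | a.1 ≤ x}) fun x y => by
      simpa [Set.subset_def] using (le_iff_atom_le_imp (a := x) (b := y)).symm)
    fun A => ⟨sSup (Subtype.val '' A), Set.ext fun a => by
      simp only [OrderEmbedding.coe_ofMapLEIff, Set.mem_ofPred_eq, a.2.le_sSup,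
        Set.exists_mem_image]
      refine ⟨fun ⟨b, hb, hab⟩ => ?_, fun ha => ⟨a, ha, le_rfl⟩⟩
      rwa [Subtype.ext ((b.2.le_iff_eq a.2.1).1 hab)]⟩

theorem stmt12 {L : Type*} [CompleteLattice L] [IsAtomistic L]
    (T : L → L → L) (hT : IsTnorm T) :
    LeftCts T ↔
      (Nonempty (L ≃o Set {a : L // IsAtom a}) ∧ ∀ x y : L, T x y = x ⊓ y) := by
  constructor
  · intro hL
    obtain rfl := hT.eq_inf_of_leftCts hL
    let := Order.Frame.ofLeftCtsInf hL
    exact ⟨⟨orderIsoSetAtoms⟩, fun _ _ => rfl⟩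
  · rintro ⟨⟨e⟩, hTM⟩
    obtain rfl : T = (· ⊓ ·) := funext₂ hTM
    exact e.leftCts_inf
end

section
/- Let L be an atomistic complete lattice (length ≥ 2). The poset of t-norms on C(L) = A(L) ∪ {0,1}, ordered pointwise, is order-isomorphic to the powerset lattice of A(L), via T ↦ {u ∈ A(L) | T(u,u) = u}. -/
abbrev CS (L : Type*) [CompleteLattice L] := {x : L // IsAtom x ∨ x = ⊥ ∨ x = ⊤}

def topCS {L : Type*} [CompleteLattice L] : CS L := ⟨⊤, Or.inr (Or.inr rfl)⟩

def IsTnormC {L : Type*} [CompleteLattice L] (T : CS L → CS L → CS L) : Prop :=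
  (∀ x : CS L, Monotone (T x)) ∧ (∀ x y : CS L, T x y = T y x) ∧
  (∀ x y z : CS L, T x (T y z) = T (T x y) z) ∧ (∀ x : CS L, T x topCS = x)

noncomputable def TbarC {L : Type*} [CompleteLattice L]
    (T : CS L → CS L → CS L) (x y : L) : L :=
  sSup {z : L | ∃ u v : CS L, (u : L) ≠ ⊥ ∧ (u : L) ≤ x ∧
    (v : L) ≠ ⊥ ∧ (v : L) ≤ y ∧ z = (T u v : L)}

def TT (L : Type*) [CompleteLattice L] : Set (L → L → L) :=
  {S | ∃ T : CS L → CS L → CS L, IsTnormC T ∧ S = TbarC T}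

section

variable {L : Type*} [CompleteLattice L]

def botCS : CS L := ⟨⊥, Or.inr (Or.inl rfl)⟩

def atomCS (a : {a : L // IsAtom a}) : CS L := ⟨a.1, Or.inl a.2⟩

lemma botCS_le (x : CS L) : botCS ≤ x := Subtype.coe_le_coe.mp bot_le

lemma le_topCS (x : CS L) : x ≤ topCS := Subtype.coe_le_coe.mp le_top

lemma botCS_ne_topCS [Nontrivial L] : (botCS : CS L) ≠ topCS :=
  fun h => bot_ne_top (congrArg Subtype.val h)

lemma CS.eq_of_le_of_ne_bot_of_ne_top {x y : CS L} (hxy : x ≤ y) (hx : x ≠ botCS)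
    (hy : y ≠ topCS) : x = y := by
  rcases y.2 with hya | hyb | hyt
  · exact Subtype.ext ((hya.le_iff.mp hxy).resolve_left fun h => hx (Subtype.ext h))
  · exact absurd (Subtype.ext (le_bot_iff.mp ((Subtype.coe_le_coe.mpr hxy).trans_eq hyb))) hx
  · exact absurd (Subtype.ext hyt) hy

lemma CS.isAtom_of_ne_bot_of_ne_top {x : CS L} (hb : x ≠ botCS) (ht : x ≠ topCS) :
    IsAtom (x : L) :=
  x.2.resolve_right fun h => h.elim (fun h => hb (Subtype.ext h)) fun h => ht (Subtype.ext h)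

namespace IsTnormC

variable {T : CS L → CS L → CS L}

lemma top_left (hT : IsTnormC T) (x : CS L) : T topCS x = x := by rw [hT.2.1, hT.2.2.2]

lemma le_left (hT : IsTnormC T) (x y : CS L) : T x y ≤ x :=
  (hT.1 x (le_topCS y)).trans_eq (hT.2.2.2 x)

lemma le_right (hT : IsTnormC T) (x y : CS L) : T x y ≤ y := hT.2.1 x y ▸ hT.le_left y x

end IsTnormC

def idempotentAtoms (T : CS L → CS L → CS L) : Set {a : L // IsAtom a} :=
  {a | (T (atomCS a) (atomCS a) : L) = a.1}

lemma idempotentAtoms_subset_iff {T T' : CS L → CS L → CS L} (hT : IsTnormC T)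
    (hT' : IsTnormC T') : idempotentAtoms T ⊆ idempotentAtoms T' ↔ T ≤ T' := by
  constructor
  · intro h x y
    by_cases hx : x = topCS
    · rw [hx, hT.top_left, hT'.top_left]
    by_cases hy : y = topCS
    · rw [hy, hT.2.2.2, hT'.2.2.2]
    by_cases hb : T x y = botCS
    · exact hb ▸ botCS_le _
    have hTx : T x y = x := CS.eq_of_le_of_ne_bot_of_ne_top (hT.le_left x y) hb hx
    obtain rfl : x = y :=
      hTx.symm.trans (CS.eq_of_le_of_ne_bot_of_ne_top (hT.le_right x y) hb hy)
    have ha : (T' x x : L) = x :=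
      h (a := ⟨x, CS.isAtom_of_ne_bot_of_ne_top (hTx ▸ hb) hx⟩) (congrArg Subtype.val hTx)
    rw [hTx, Subtype.ext ha]
  · intro h a ha
    exact le_antisymm (hT'.le_left _ _) (ha.ge.trans (Subtype.coe_le_coe.mpr (h _ _)))

open Classical in
noncomputable def tnormOfSet (α : Set {a : L // IsAtom a}) (x y : CS L) : CS L :=
  if x = topCS then y else if y = topCS then x
  else if x = y ∧ (x : L) ∈ Subtype.val '' α then x else botCS

section tnormOfSet

variable (α : Set {a : L // IsAtom a})

lemma tnormOfSet_top_right (x : CS L) : tnormOfSet α x topCS = x := by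
  unfold tnormOfSet; grind

lemma tnormOfSet_comm (x y : CS L) : tnormOfSet α x y = tnormOfSet α y x := by
  unfold tnormOfSet; grind

lemma tnormOfSet_le_left (x y : CS L) : tnormOfSet α x y ≤ x := by
  unfold tnormOfSet
  split_ifs with hx
  exacts [hx ▸ le_topCS y, le_rfl, le_rfl, botCS_le x]

lemma tnormOfSet_bot_right (x : CS L) : tnormOfSet α x botCS = botCS :=
  le_antisymm (tnormOfSet_comm α x botCS ▸ tnormOfSet_le_left α botCS x) (botCS_le _)

lemma tnormOfSet_mono (x : CS L) : Monotone (tnormOfSet α x) := by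
  intro y y' hyy'
  rcases eq_or_ne y botCS with rfl | hb
  · rw [tnormOfSet_bot_right]; exact botCS_le _
  rcases eq_or_ne y' topCS with rfl | ht
  · exact (tnormOfSet_top_right α x).symm ▸ tnormOfSet_le_left α x y
  rw [CS.eq_of_le_of_ne_bot_of_ne_top hyy' hb ht]

lemma tnormOfSet_assoc [Nontrivial L] (x y z : CS L) :
    tnormOfSet α x (tnormOfSet α y z) = tnormOfSet α (tnormOfSet α x y) z := by
  have := botCS_ne_topCS (L := L)
  unfold tnormOfSet; grind

lemma isTnormC_tnormOfSet [Nontrivial L] : IsTnormC (tnormOfSet α) :=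
  ⟨tnormOfSet_mono α, tnormOfSet_comm α, tnormOfSet_assoc α, tnormOfSet_top_right α⟩

lemma idempotentAtoms_tnormOfSet (htop : ¬IsAtom (⊤ : L)) :
    idempotentAtoms (tnormOfSet α) = α := by
  ext a
  have hat : atomCS a ≠ topCS := fun h => htop (congrArg Subtype.val h ▸ a.2 :)
  simp only [idempotentAtoms, tnormOfSet, hat, if_false, Set.mem_ofPred_eq]
  split_ifs with h
  · exact iff_of_true rfl (Subtype.val_injective.mem_set_image.mp h.2)
  · exact iff_of_false (a.2.1 ∘ Eq.symm) fun ha => h ⟨rfl, a, ha, rfl⟩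

end tnormOfSet

noncomputable def tnormOrderIso [Nontrivial L] (htop : ¬IsAtom (⊤ : L)) :
    {T : CS L → CS L → CS L // IsTnormC T} ≃o Set {a : L // IsAtom a} :=
  OrderIso.ofSurjective
    (OrderEmbedding.ofMapLEIff (fun T => idempotentAtoms T.1) fun T T' =>
      idempotentAtoms_subset_iff T.2 T'.2)
    fun α => ⟨⟨tnormOfSet α, isTnormC_tnormOfSet α⟩, idempotentAtoms_tnormOfSet α htop⟩

end

theorem stmt15_general {L : Type*} [CompleteLattice L]
    (hlen : ∃ x : L, x ≠ ⊥ ∧ x ≠ ⊤) :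
    ∃ e : {T : CS L → CS L → CS L // IsTnormC T} ≃o Set {a : L // IsAtom a},
      ∀ T : {T : CS L → CS L → CS L // IsTnormC T},
        e T = {a : {a : L // IsAtom a} |
          (T.1 ⟨a.1, Or.inl a.2⟩ ⟨a.1, Or.inl a.2⟩ : L) = a.1} := by
  obtain ⟨w, hw_bot, hw_top⟩ := hlen
  have : Nontrivial L := nontrivial_of_ne w ⊥ hw_bot
  have htop : ¬IsAtom (⊤ : L) := fun h => hw_bot (h.2 w (lt_top_iff_ne_top.mpr hw_top))
  exact ⟨tnormOrderIso htop, fun T => rfl⟩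

theorem stmt15 {L : Type*} [CompleteLattice L] [IsAtomistic L]
    (hlen : ∃ x : L, x ≠ ⊥ ∧ x ≠ ⊤) :
    ∃ e : {T : CS L → CS L → CS L // IsTnormC T} ≃o Set {a : L // IsAtom a},
      ∀ T : {T : CS L → CS L → CS L // IsTnormC T},
        e T = {a : {a : L // IsAtom a} |
          (T.1 ⟨a.1, Or.inl a.2⟩ ⟨a.1, Or.inl a.2⟩ : L) = a.1} :=
  stmt15_general hlen
end

section
/- Let L be a finite lattice whose top element 1 is join-irreducible, L̃ its atomistic extension, and T̄ a left-semicontinuous t-norm on L̃ such that T̄|_L is a t-norm on L. Then T̄|_L is left-continuous on L. -/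
def JIrrOn {M : Type*} [CompleteLattice M] (Ls : Set M) (p : M) : Prop :=
  p ∈ Ls ∧ p ≠ ⊥ ∧ ∀ x ∈ Ls, ∀ y ∈ Ls, p = x ⊔ y → p = x ∨ p = y

def AtomOn {M : Type*} [CompleteLattice M] (Ls : Set M) (p : M) : Prop :=
  p ∈ Ls ∧ ⊥ < p ∧ ∀ x ∈ Ls, x < p → x = ⊥

def HOn {M : Type*} [CompleteLattice M] (Ls : Set M) : Set M :=
  {p | JIrrOn Ls p ∧ ¬ AtomOn Ls p}

/-! Left-semicontinuity already gives the equation whenever `sSup S ≠ ⊤`. Otherwise `S` is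
finite (as `M` is) and lies in `Ls`, so join-irreducibility of `⊤` in `Ls` forces `⊤ ∈ S`; then
`⊤` is the greatest element of `S`, and by monotonicity `Tb a ⊤` is the greatest of the values
`Tb a x`, `x ∈ S`. -/

theorem JIrrOn.mem_of_sSup_eq {M : Type*} [CompleteLattice M] {Ls : Set M} {p : M}
    (hp : JIrrOn Ls p) (hbot : ⊥ ∈ Ls) (hjoin : SupClosed Ls) {S : Set M} (hS : S.Finite)
    (hsub : S ⊆ Ls) (h : sSup S = p) : p ∈ S := by
  induction S, hS using Set.Finite.induction_on with
  | empty => exact absurd (sSup_empty.symm.trans h).symm hp.2.1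
  | @insert a s _ hs ih =>
    have hsLs : s ⊆ Ls := (Set.subset_insert a s).trans hsub
    rw [sSup_insert] at h
    rcases hp.2.2 a (hsub (Set.mem_insert a s)) _ (hjoin.sSup_mem hs hbot hsLs) h.symm with
      hpa | hps
    · exact hpa ▸ Set.mem_insert a s
    · exact Set.mem_insert_of_mem a (ih hsLs hps.symm)

theorem Monotone.biSup_eq_of_isGreatest {α β : Type*} [Preorder α] [CompleteLattice β]
    {f : α → β} (hf : Monotone f) {S : Set α} {m : α} (hm : IsGreatest S m) :
    ⨆ x ∈ S, f x = f m := by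
  rw [← sSup_image, (hf.map_isGreatest hm).csSup_eq]

theorem stmt19_general {M : Type*} [CompleteLattice M] [Fintype M]
    (Ls : Set M) (hbot : ⊥ ∈ Ls)
    (hjoin : ∀ x ∈ Ls, ∀ y ∈ Ls, x ⊔ y ∈ Ls)
    (h1JI : JIrrOn Ls ⊤)
    (Tb : M → M → M)
    (hTb : IsTnorm Tb) (hsemi : LeftSemicts Tb) :
    ∀ a ∈ Ls, ∀ S : Set M, S ⊆ Ls → Tb a (sSup S) = ⨆ x ∈ S, Tb a x := by
  intro a _ S hsub
  by_cases hS : sSup S = ⊤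
  · have htop : IsGreatest S ⊤ :=
      ⟨h1JI.mem_of_sSup_eq hbot (fun x hx y hy => hjoin x hx y hy) S.toFinite hsub hS,
        fun _ _ => le_top⟩
    rw [htop.csSup_eq, (hTb.1 a).biSup_eq_of_isGreatest htop]
  · exact hsemi a S hS

theorem stmt19 {M : Type*} [CompleteLattice M] [Fintype M] [IsAtomistic M]
    (Ls : Set M) (hbot : ⊥ ∈ Ls) (htop : ⊤ ∈ Ls)
    (hmeet : ∀ x ∈ Ls, ∀ y ∈ Ls, x ⊓ y ∈ Ls)
    (hjoin : ∀ x ∈ Ls, ∀ y ∈ Ls, x ⊔ y ∈ Ls)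
    (w : M → M)
    (hw : ∀ p ∈ HOn Ls, (⊥ ⋖ w p) ∧ (w p ⋖ p) ∧ w p ∉ Ls)
    (hwinj : ∀ p ∈ HOn Ls, ∀ q ∈ HOn Ls, w p = w q → p = q)
    (hall : ∀ x : M, x ∈ Ls ∨ ∃ p ∈ HOn Ls, x = w p)
    (h1JI : JIrrOn Ls ⊤)
    (Tb : M → M → M)
    (hgen : ∃ T : M → M → M, IsTnormOn (CL M) T ∧ Tb = Tbar T)
    (hTb : IsTnorm Tb) (hsemi : LeftSemicts Tb)
    (hres : IsTnormOn Ls Tb) :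
    ∀ a ∈ Ls, ∀ S : Set M, S ⊆ Ls → Tb a (sSup S) = ⨆ x ∈ S, Tb a x :=
  stmt19_general Ls hbot hjoin h1JI Tb hTb hsemi
end
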